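/- arXiv:2210.11627 — 3 statements merged into one kernel-verified Lean document; each statement's English description precedes it below -/
import Mathlib

section
/- Let f be an onto, tops-only voting rule on the universal domain of strict preferences over a finite set X of alternatives. Then f is not obviously manipulable if and only if for every agent i, every alternative vetoed by agent i is strongly vetoed by agent i (i.e., SV_i = V_i). -/
/-- A preference profile: each agent `i : Fin n` has a strict preference,
modeled as a linear order on the set of alternatives `X`. -/
abbrev Profile (n : ℕ) (X : Type*) := Fin n → LinearOrder X

/-- The top (best) alternative of a preference `L`. -/
noncomputable def top {X : Type*} [Fintype X] [Nonempty X] (L : LinearOrder X) : X :=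
  @Finset.max' X L Finset.univ Finset.univ_nonempty

/-- `x` is strictly preferred to `y` according to `L`. -/
def prefers {X : Type*} (L : LinearOrder X) (x y : X) : Prop := L.lt y x

/-- The option set left open by preference `L` of agent `i` at rule `f`. -/
def OptionSet {n : ℕ} {X : Type*} (f : Profile n X → X) (i : Fin n) (L : LinearOrder X) :
    Set X :=
  {x | ∃ P : Profile n X, P i = L ∧ f P = x}

/-- `Li'` is a profitable manipulation of `f` at (true preference) `Li` for agent `i`. -/
def IsManip {n : ℕ} {X : Type*} (f : Profile n X → X) (i : Fin n)
    (Li Li' : LinearOrder X) : Prop :=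
  ∃ P : Profile n X, P i = Li ∧ prefers Li (f (Function.update P i Li')) (f P)

/-- The worst element of `O(Li')` is strictly `Li`-preferred to the worst element of `O(Li)`.
For nonempty finite option sets this is equivalent to: some element of `O(Li)` is strictly
worse (w.r.t. `Li`) than every element of `O(Li')`. -/
def WorstImproves {n : ℕ} {X : Type*} (f : Profile n X → X) (i : Fin n)
    (Li Li' : LinearOrder X) : Prop :=
  ∃ w ∈ OptionSet f i Li, ∀ w' ∈ OptionSet f i Li', prefers Li w' w

/-- The best element of `O(Li')` is strictly `Li`-preferred to the best element of `O(Li)`.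
For nonempty finite option sets this is equivalent to: some element of `O(Li')` is strictly
better (w.r.t. `Li`) than every element of `O(Li)`. -/
def BestImproves {n : ℕ} {X : Type*} (f : Profile n X → X) (i : Fin n)
    (Li Li' : LinearOrder X) : Prop :=
  ∃ b' ∈ OptionSet f i Li', ∀ b ∈ OptionSet f i Li, prefers Li b' b

/-- `Li'` is an obvious manipulation of `f` at `Li` for agent `i`. -/
def IsObviousManip {n : ℕ} {X : Type*} (f : Profile n X → X) (i : Fin n)
    (Li Li' : LinearOrder X) : Prop :=
  IsManip f i Li Li' ∧ (WorstImproves f i Li Li' ∨ BestImproves f i Li Li')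

/-- `f` is not obviously manipulable. -/
def NOM {n : ℕ} {X : Type*} (f : Profile n X → X) : Prop :=
  ∀ (i : Fin n) (Li Li' : LinearOrder X), ¬ IsObviousManip f i Li Li'

/-- `f` is tops-only. -/
def TopsOnly {n : ℕ} {X : Type*} [Fintype X] [Nonempty X] (f : Profile n X → X) : Prop :=
  ∀ P P' : Profile n X, (∀ i, top (P i) = top (P' i)) → f P = f P'

/-- The set `V_i` of alternatives that agent `i` vetoes via some preference. -/
def VetoSet {n : ℕ} {X : Type*} (f : Profile n X → X) (i : Fin n) : Set X :=
  {x | ∃ L : LinearOrder X, x ∉ OptionSet f i L}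

/-- The set `SV_i` of alternatives strongly vetoed by agent `i`:
`x` is vetoed via `L` precisely when the top of `L` differs from `x`. -/
def StrongVetoSet {n : ℕ} {X : Type*} [Fintype X] [Nonempty X]
    (f : Profile n X → X) (i : Fin n) : Set X :=
  {x | ∀ L : LinearOrder X, x ∉ OptionSet f i L ↔ top L ≠ x}

/-- `f` is dictatorial: some agent's top alternative is always selected. -/
def Dictatorial {n : ℕ} {X : Type*} [Fintype X] [Nonempty X]
    (f : Profile n X → X) : Prop :=
  ∃ i : Fin n, ∀ P : Profile n X, f P = top (P i)

/-!
If `top L` is missing from the option set of `L`, reporting the preference of a profile that elects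
`top L` is an obvious manipulation at `L`: its option set contains something better than everything
available at `L`. If `x` is vetoed via `L'` yet is an option at some `L` with `top L ≠ x`, then by
tops-onlyness it is also an option at a preference `Lᵢ` with the same top and `x` at the bottom,
and `L'`, which excludes the worst option `x`, is an obvious manipulation at `Lᵢ`.
Conversely, if every veto is strong, the top of `Lᵢ` is always an option at `Lᵢ`, so the best
case cannot improve, and every other option at `Lᵢ` is an option at every preference, so neither
can the worst case.
-/

open Function

section Orders

variable {X : Type*} [Fintype X] [Nonempty X]

theorem top_maximal (L : LinearOrder X) (y : X) : L.le y (top L) :=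
  @Finset.le_max' X L _ y (Finset.mem_univ y)

theorem top_eq_of_forall_le (L : LinearOrder X) {x : X} (h : ∀ y, L.le y x) : top L = x :=
  @le_antisymm X L.toPartialOrder _ _ (h _) (top_maximal L x)

theorem prefers_top_of_ne (L : LinearOrder X) {y : X} (h : y ≠ top L) : prefers L (top L) y :=
  @lt_of_le_of_ne X L.toPartialOrder _ _ (top_maximal L y) h

theorem not_prefers_top (L : LinearOrder X) (y : X) : ¬ prefers L y (top L) :=
  @not_lt_of_ge X L.toPreorder _ _ (top_maximal L y)

theorem exists_linearOrder_top_bot {t x : X} (h : t ≠ x) :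
    ∃ L : LinearOrder X, top L = t ∧ ∀ y, y ≠ x → prefers L y x := by
  classical
  let e := Fintype.equivFin X
  let r : X → ℕ := fun y => if y = t then Fintype.card X + 1 else if y = x then 0 else e y + 1
  have hr : Injective r := by
    intro a b hab
    have ha := (e a).is_lt
    have hb := (e b).is_lt
    simp only [r] at hab
    split_ifs at hab <;>
      first | (subst_vars; rfl) | omega | exact e.injective (Fin.ext (by omega))
  refine ⟨LinearOrder.lift' r hr, top_eq_of_forall_le _ fun y => ?_, fun y hy => ?_⟩
  · change r y ≤ r t
    have := (e y).is_lt
    simp only [r]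
    split_ifs <;> omega
  · change r x < r y
    simp only [r]
    split_ifs <;> first | omega | (subst_vars; contradiction)

end Orders

section OptionSets

variable {n : ℕ} {X : Type*} (f : Profile n X → X) (i : Fin n)

theorem update_mem_optionSet (P : Profile n X) (L : LinearOrder X) :
    f (update P i L) ∈ OptionSet f i L :=
  ⟨_, update_self .., rfl⟩

theorem optionSet_nonempty (L : LinearOrder X) : (OptionSet f i L).Nonempty :=
  ⟨_, update_mem_optionSet f i (fun _ => L) L⟩

theorem isObviousManip_of_worst_mem {Li L' : LinearOrder X} {x : X}
    (hworst : ∀ y, y ≠ x → prefers Li y x) (hx : x ∈ OptionSet f i Li)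
    (hx' : x ∉ OptionSet f i L') : IsObviousManip f i Li L' := by
  obtain ⟨P, hPi, hPx⟩ := hx
  refine ⟨⟨P, hPi, ?_⟩,
    Or.inl ⟨x, ⟨P, hPi, hPx⟩, fun w hw => hworst w (ne_of_mem_of_not_mem hw hx')⟩⟩
  rw [hPx]
  exact hworst _ (ne_of_mem_of_not_mem (update_mem_optionSet f i P L') hx')

variable [Fintype X] [Nonempty X]

theorem optionSet_eq_of_top_eq (htops : TopsOnly f) {L L' : LinearOrder X}
    (h : top L = top L') : OptionSet f i L = OptionSet f i L' := by
  have subset : ∀ {L L' : LinearOrder X}, top L = top L' →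
      OptionSet f i L ⊆ OptionSet f i L' := by
    rintro L L' h _ ⟨P, hPi, rfl⟩
    refine ⟨update P i L', update_self .., htops _ _ fun j => ?_⟩
    rcases eq_or_ne j i with rfl | hj
    · rw [update_self, hPi, h]
    · rw [update_of_ne hj]
  exact (subset h).antisymm (subset h.symm)

theorem isObviousManip_of_top_not_mem {L : LinearOrder X} {P : Profile n X} (hP : f P = top L)
    (htop : top L ∉ OptionSet f i L) : IsObviousManip f i L (P i) := by
  refine ⟨⟨update P i L, update_self .., ?_⟩,
    Or.inr ⟨top L, ⟨P, rfl, hP⟩,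
      fun b hb => prefers_top_of_ne L (ne_of_mem_of_not_mem hb htop)⟩⟩
  rw [update_idem, update_eq_self, hP]
  exact prefers_top_of_ne L (ne_of_mem_of_not_mem (update_mem_optionSet f i P L) htop)

theorem top_mem_optionSet_of_nom (honto : Surjective f) (hnom : NOM f) (L : LinearOrder X) :
    top L ∈ OptionSet f i L := by
  by_contra htop
  obtain ⟨P, hP⟩ := honto (top L)
  exact hnom i L (P i) (isObviousManip_of_top_not_mem f i hP htop)

theorem vetoSet_subset_strongVetoSet_of_nom (honto : Surjective f) (htops : TopsOnly f)
    (hnom : NOM f) : VetoSet f i ⊆ StrongVetoSet f i := by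
  rintro x ⟨L', hx'⟩ L
  by_cases hL : top L = x
  · subst hL
    exact iff_of_false (not_not_intro (top_mem_optionSet_of_nom f i honto hnom L))
      (not_not_intro rfl)
  · refine iff_of_true (fun hx => ?_) hL
    obtain ⟨Li, hLi, hworst⟩ := exists_linearOrder_top_bot hL
    rw [← optionSet_eq_of_top_eq f i htops hLi] at hx
    exact hnom i Li L' (isObviousManip_of_worst_mem f i hworst hx hx')

theorem strongVetoSet_subset_vetoSet [Nontrivial X] : StrongVetoSet f i ⊆ VetoSet f i := by
  intro x hx
  obtain ⟨y, hy⟩ := exists_ne x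
  obtain ⟨L, hL, -⟩ := exists_linearOrder_top_bot hy
  exact ⟨L, (hx L).mpr (hL ▸ hy)⟩

theorem top_mem_optionSet_of_strongVetoSet_eq (hSV : StrongVetoSet f i = VetoSet f i)
    (L : LinearOrder X) : top L ∈ OptionSet f i L := by
  by_contra htop
  have hsv : top L ∈ StrongVetoSet f i := hSV ▸ ⟨L, htop⟩
  exact (hsv L).mp htop rfl

theorem mem_optionSet_of_strongVetoSet_eq (hSV : StrongVetoSet f i = VetoSet f i)
    {L : LinearOrder X} {y : X} (hy : y ∈ OptionSet f i L) (hne : top L ≠ y)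
    (L' : LinearOrder X) : y ∈ OptionSet f i L' := by
  by_contra hy'
  have hsv : y ∈ StrongVetoSet f i := hSV ▸ ⟨L', hy'⟩
  exact (hsv L).mpr hne hy

theorem nom_of_strongVetoSet_eq (hSV : ∀ i, StrongVetoSet f i = VetoSet f i) : NOM f := by
  rintro i Li Li' ⟨-, ⟨w, hw, hworse⟩ | ⟨b, -, hbetter⟩⟩
  · by_cases htop : top Li = w
    · obtain ⟨w', hw'⟩ := optionSet_nonempty f i Li'
      exact not_prefers_top Li w' (htop ▸ hworse w' hw')
    · exact @lt_irrefl X Li.toPreorder w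
        (hworse w (mem_optionSet_of_strongVetoSet_eq f i (hSV i) hw htop Li'))
  · exact not_prefers_top Li b
      (hbetter _ (top_mem_optionSet_of_strongVetoSet_eq f i (hSV i) Li))

end OptionSets

theorem main_theorem_general {n : ℕ} {X : Type*} [Fintype X] [Nonempty X]
    (hX : 2 ≤ Fintype.card X)
    (f : Profile n X → X) (honto : Function.Surjective f) (htops : TopsOnly f) :
    NOM f ↔ ∀ i : Fin n, StrongVetoSet f i = VetoSet f i := by
  have : Nontrivial X := Fintype.one_lt_card_iff_nontrivial.mp hX
  exact ⟨fun hnom i => (strongVetoSet_subset_vetoSet f i).antisymm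
      (vetoSet_subset_strongVetoSet_of_nom f i honto htops hnom),
    nom_of_strongVetoSet_eq f⟩

/-- An onto tops-only rule is NOM iff every veto is a strong veto (`SV_i = V_i` for all `i`). -/
theorem main_theorem {n : ℕ} {X : Type*} [Fintype X] [Nonempty X]
    (hn : 2 ≤ n) (hX : 2 ≤ Fintype.card X)
    (f : Profile n X → X) (honto : Function.Surjective f) (htops : TopsOnly f) :
    NOM f ↔ ∀ i : Fin n, StrongVetoSet f i = VetoSet f i :=
  main_theorem_general hX f honto htops
end

section
/- Let f be an efficient, anonymous, tops-only, onto rule on the universal domain. Then f is NOM if and only if either V_i = ∅ for every agent i, or there exists y ∈ X such that SV_i = V_i = {y} for every agent i. -/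
/-- `f` is efficient: it never selects a Pareto-dominated alternative. -/
def Efficient {n : ℕ} {X : Type*} (f : Profile n X → X) : Prop :=
  ∀ P : Profile n X, ¬ ∃ x : X, ∀ i, prefers (P i) x (f P)

/-- `f` is anonymous: invariant under permutations of the agents. -/
def Anonymous {n : ℕ} {X : Type*} (f : Profile n X → X) : Prop :=
  ∀ (σ : Equiv.Perm (Fin n)) (P : Profile n X), f (P ∘ σ) = f P

set_option linter.unusedSectionVars false
set_option linter.unusedVariables false

section Helpers

variable {X : Type*} [Fintype X] [Nonempty X]
open scoped Classical

lemma le_top' (L : LinearOrder X) (z : X) : L.le z (top L) :=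
  @Finset.le_max' X L _ z (Finset.mem_univ z)

lemma top_eq (L : LinearOrder X) (b : X) (hb : ∀ z, L.le z b) : top L = b := by
  letI := L
  exact le_antisymm (Finset.max'_le _ _ _ fun z _ => hb z) (le_top' L b)

lemma lt_of_le_ne (L : LinearOrder X) {a b : X} (h : L.le a b) (h2 : a ≠ b) : L.lt a b := by
  letI := L
  exact lt_of_le_of_ne h h2

lemma not_lt_of_le' (L : LinearOrder X) {a b : X} (h : L.le a b) : ¬ L.lt b a := by
  letI := L
  exact not_lt_of_ge h

lemma lt_irrefl' (L : LinearOrder X) (a : X) : ¬ L.lt a a := by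
  letI := L
  exact lt_irrefl a

noncomputable def baseR : X → ℕ := fun z => ((Fintype.equivFin X) z : ℕ)

lemma baseR_lt (z : X) : baseR z < Fintype.card X := ((Fintype.equivFin X) z).isLt

lemma baseR_inj : Function.Injective (baseR (X := X)) := fun a b h =>
  (Fintype.equivFin X).injective (Fin.ext h)

/-- ranking with top `b` and minimum `x`. -/
noncomputable def h1 (b x : X) : X → ℕ := fun z =>
  if z = x then 0 else if z = b then Fintype.card X + 1 else baseR z + 1

lemma h1_inj (b x : X) : Function.Injective (h1 b x) := by
  intro a c h
  unfold h1 at h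
  have ha := baseR_lt a; have hc := baseR_lt c
  split_ifs at h <;>
    first
      | (subst_vars; rfl)
      | (exfalso; omega)
      | exact baseR_inj (by omega)

/-- order with top `b`, minimum `x`. -/
noncomputable def ordTopMin (b x : X) : LinearOrder X := LinearOrder.lift' (h1 b x) (h1_inj b x)

lemma ordTopMin_top (b x : X) (hbx : b ≠ x) : top (ordTopMin b x) = b := by
  have hbv : h1 b x b = Fintype.card X + 1 := by simp [h1, hbx]
  refine top_eq _ _ fun z => ?_
  show h1 b x z ≤ h1 b x b
  rw [hbv]
  unfold h1
  have := baseR_lt z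
  split_ifs <;> omega

lemma ordTopMin_min (b x : X) {z : X} (hz : z ≠ x) : (ordTopMin b x).lt x z := by
  have hxv : h1 b x x = 0 := by simp [h1]
  show h1 b x x < h1 b x z
  rw [hxv]
  unfold h1
  have := baseR_lt z
  split_ifs with p1 p2
  · exact absurd p1 hz
  · omega
  · omega

/-- ranking with top `b` and second `s`. -/
noncomputable def h2 (b s : X) : X → ℕ := fun z =>
  if z = b then Fintype.card X + 2 else if z = s then Fintype.card X + 1 else baseR z

lemma h2_inj (b s : X) : Function.Injective (h2 b s) := by
  intro a c h
  unfold h2 at h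
  have ha := baseR_lt a; have hc := baseR_lt c
  split_ifs at h <;>
    first
      | (subst_vars; rfl)
      | (exfalso; omega)
      | exact baseR_inj (by omega)

noncomputable def ordTopSecond (b s : X) : LinearOrder X :=
  LinearOrder.lift' (h2 b s) (h2_inj b s)

lemma ordTopSecond_top (b s : X) (hbs : b ≠ s) : top (ordTopSecond b s) = b := by
  have hbv : h2 b s b = Fintype.card X + 2 := by simp [h2]
  refine top_eq _ _ fun z => ?_
  show h2 b s z ≤ h2 b s b
  rw [hbv]
  unfold h2
  have := baseR_lt z
  split_ifs <;> omega

lemma ordTopSecond_second (b s : X) {z : X} (hz : z ≠ b) : (ordTopSecond b s).le z s := by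
  show h2 b s z ≤ h2 b s s
  unfold h2
  have := baseR_lt z
  rw [if_neg hz]
  split_ifs <;> first | omega | exact absurd rfl (by assumption)

end Helpers

section Rule

variable {n : ℕ} {X : Type*} [Fintype X] [Nonempty X] {f : Profile n X → X}

lemma unanimity (heff : Efficient f) (P : Profile n X) (x : X)
    (h : ∀ j, top (P j) = x) : f P = x := by
  by_contra hne
  exact heff P ⟨x, fun j => lt_of_le_ne (P j) ((h j) ▸ le_top' (P j) (f P)) hne⟩

lemma mem_option_of_top (heff : Efficient f) (i : Fin n) (L : LinearOrder X) :
    top L ∈ OptionSet f i L :=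
  ⟨fun _ => L, rfl, unanimity heff _ _ fun _ => rfl⟩

lemma option_congr_top (htops : TopsOnly f) (i : Fin n) {L L' : LinearOrder X}
    (h : top L = top L') : OptionSet f i L ⊆ OptionSet f i L' := by
  rintro x ⟨P, hPi, hfP⟩
  refine ⟨Function.update P i L', Function.update_self i L' P, ?_⟩
  rw [← hfP]
  apply htops
  intro j
  by_cases hj : j = i
  · subst hj; rw [Function.update_self, hPi, h]
  · rw [Function.update_of_ne hj]

lemma option_agent (hanon : Anonymous f) (i j : Fin n) (L : LinearOrder X) :
    OptionSet f i L ⊆ OptionSet f j L := by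
  rintro x ⟨P, hPi, hfP⟩
  refine ⟨P ∘ Equiv.swap i j, ?_, ?_⟩
  · show P (Equiv.swap i j j) = L
    rw [Equiv.swap_apply_right]; exact hPi
  · rw [hanon]; exact hfP

end Rule

section Main

variable {n : ℕ} {X : Type*} [Fintype X] [Nonempty X] {f : Profile n X → X}

/-- If `x` is vetoed via some preference, then under NOM it is vetoed via every
preference whose top is not `x`. -/
lemma strong_veto_of_veto (hNOM : NOM f) (htops : TopsOnly f) {i : Fin n} {x : X}
    {La : LinearOrder X} (hx : x ∉ OptionSet f i La) :
    ∀ L, top L ≠ x → x ∉ OptionSet f i L := by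
  intro Lb hbx hxin
  set b := top Lb with hb
  set Li := ordTopMin b x with hLi
  have htopLi : top Li = b := ordTopMin_top b x hbx
  have hxin' : x ∈ OptionSet f i Li :=
    option_congr_top htops i (hb ▸ htopLi.symm) hxin
  obtain ⟨P, hPi, hfP⟩ := hxin'
  apply hNOM i Li La
  have hmem : ∀ Q : Profile n X, Q i = La → f Q ≠ x := fun Q hQ e => hx ⟨Q, hQ, e⟩
  constructor
  · refine ⟨P, hPi, ?_⟩
    show Li.lt (f P) (f (Function.update P i La))
    rw [hfP]
    exact ordTopMin_min b x (hmem _ (Function.update_self i La P))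
  · left
    refine ⟨x, ⟨P, hPi, hfP⟩, fun w' hw' => ?_⟩
    show Li.lt x w'
    obtain ⟨Q, hQ, hfQ⟩ := hw'
    exact ordTopMin_min b x (hfQ ▸ hmem Q hQ)

/-- No two distinct alternatives can both be strongly vetoed. -/
lemma not_two_strong (heff : Efficient f) (hanon : Anonymous f) (hn : 2 ≤ n)
    {i : Fin n} {x y : X} (hxy : x ≠ y)
    (hx : ∀ L, top L ≠ x → x ∉ OptionSet f i L)
    (hy : ∀ L, top L ≠ y → y ∉ OptionSet f i L) : False := by
  obtain ⟨j, hj⟩ := Fintype.exists_ne_of_one_lt_card (by simp only [Fintype.card_fin]; omega) i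
  set L1 := ordTopSecond x y with hL1
  set L2 := ordTopSecond y x with hL2
  set P : Profile n X := fun k => if k = i then L1 else L2 with hP
  have hPi : P i = L1 := if_pos rfl
  have hPj : P j = L2 := if_neg hj
  have hzy : f P ≠ y := fun e => hy L1 (by rw [ordTopSecond_top x y hxy]; exact hxy)
      ⟨P, hPi, e⟩
  have hzx : f P ≠ x := by
    intro e
    have h1 : f P ∈ OptionSet f j L2 := ⟨P, hPj, rfl⟩
    have h2 : f P ∈ OptionSet f i L2 := option_agent hanon j i L2 h1
    exact hx L2 (by rw [ordTopSecond_top y x hxy.symm]; exact hxy.symm) (e ▸ h2)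
  apply heff P
  refine ⟨y, fun k => ?_⟩
  show (P k).lt (f P) y
  by_cases hk : k = i
  · rw [hk, hPi]
    exact lt_of_le_ne L1 (ordTopSecond_second x y hzx) hzy
  · have hPk : P k = L2 := if_neg hk
    rw [hPk]
    exact lt_of_le_ne L2 ((ordTopSecond_top y x hxy.symm) ▸ le_top' L2 (f P)) hzy

end Main


/-- An efficient, anonymous, onto, tops-only rule is NOM iff either every veto set is
empty, or there is `y ∈ X` with `SV_i = V_i = {y}` for every agent `i`. -/
theorem efficient_anonymous_NOM_characterization {n : ℕ} {X : Type*} [Fintype X] [Nonempty X]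
    (hn : 2 ≤ n) (hX : 2 ≤ Fintype.card X)
    (f : Profile n X → X) (honto : Function.Surjective f) (htops : TopsOnly f)
    (heff : Efficient f) (hanon : Anonymous f) :
    NOM f ↔
      (∀ i : Fin n, VetoSet f i = ∅) ∨
      (∃ y : X, ∀ i : Fin n,
        StrongVetoSet f i = {y} ∧ VetoSet f i = {y}) := by
  constructor
  · intro hNOM
    by_cases hV : ∀ i, VetoSet f i = ∅
    · exact Or.inl hV
    · right
      push_neg at hV
      obtain ⟨i₀, hi₀⟩ := hV
      obtain ⟨x, hxV⟩ := hi₀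
      obtain ⟨La, hxLa⟩ := hxV
      have hSVp : ∀ L, top L ≠ x → x ∉ OptionSet f i₀ L :=
        strong_veto_of_veto hNOM htops hxLa
      have hEq : ∀ (i : Fin n) (L : LinearOrder X),
          OptionSet f i L = OptionSet f i₀ L := fun i L =>
        Set.Subset.antisymm (option_agent hanon i i₀ L) (option_agent hanon i₀ i L)
      have huniq : ∀ z, (∀ L, top L ≠ z → z ∉ OptionSet f i₀ L) → z = x := by
        intro z hz
        by_contra hzx
        exact not_two_strong heff hanon hn hzx hz hSVp
      refine ⟨x, fun i => ⟨?_, ?_⟩⟩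
      · ext z
        simp only [StrongVetoSet, Set.mem_setOf_eq, Set.mem_singleton_iff]
        constructor
        · intro hz
          refine huniq z fun L hL => ?_
          rw [← hEq i L]
          exact (hz L).mpr hL
        · rintro rfl L
          constructor
          · intro hnot
            intro htop
            exact hnot (htop ▸ mem_option_of_top heff i L)
          · intro hL
            rw [hEq i L]
            exact hSVp L hL
      · ext z
        simp only [VetoSet, Set.mem_setOf_eq, Set.mem_singleton_iff]
        constructor
        · rintro ⟨L, hzL⟩
          exact huniq z (strong_veto_of_veto hNOM htops (hEq i L ▸ hzL))
        · rintro rfl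
          obtain ⟨b, hb⟩ := Fintype.exists_ne_of_one_lt_card (by omega) z
          refine ⟨ordTopMin b z, ?_⟩
          rw [hEq i (ordTopMin b z)]
          exact hSVp _ (by rw [ordTopMin_top b z hb]; exact hb)
  · rintro hcase i Li Li' ⟨hman, hor⟩
    rcases hor with hworst | hbest
    · obtain ⟨w, hw, hall⟩ := hworst
      rcases hcase with hV | h
      · have hfull : w ∈ OptionSet f i Li' := by
          by_contra h
          have hmem : w ∈ VetoSet f i := ⟨Li', h⟩
          rw [hV i] at hmem
          exact hmem
        exact lt_irrefl' Li w (hall w hfull)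
      · obtain ⟨y, hy⟩ := h
        have hy_mem : ∀ (L : LinearOrder X) (z : X), z ≠ y → z ∈ OptionSet f i L := by
          intro L z hzy
          by_contra h
          have hmem : z ∈ VetoSet f i := ⟨L, h⟩
          rw [(hy i).2] at hmem
          exact hzy hmem
        by_cases hwy : w = y
        · subst hwy
          have hySV : w ∈ StrongVetoSet f i := by
            rw [(hy i).1]
            exact rfl
          have htopLi : top Li = w := by
            by_contra ht
            exact (hySV Li).mpr ht hw
          obtain ⟨z, hz⟩ := Fintype.exists_ne_of_one_lt_card (by omega) w
          have hlt : Li.lt w z := hall z (hy_mem Li' z hz)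
          exact not_lt_of_le' Li (htopLi ▸ le_top' Li z) hlt
        · exact lt_irrefl' Li w (hall w (hy_mem Li' w hwy))
    · obtain ⟨b', hb', hall⟩ := hbest
      have h1 : Li.lt (top Li) b' := hall (top Li) (mem_option_of_top heff i Li)
      exact not_lt_of_le' Li (le_top' Li b') h1
end

section
/- For a median voter scheme f^α on X = {a,...,b} with fixed ballots α_1 ≤ ... ≤ α_{n-1}, an alternative x lies in the veto set V_i of agent i if and only if x < α_1 or x > α_{n-1}. -/
/-- The ordered set of alternatives `X = {a, a+1, ..., b} ⊆ ℕ`. -/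
abbrev Alt (a b : ℕ) : Type := {x : ℕ // x ∈ Finset.Icc a b}

/-- The median of a multiset (w.r.t. the canonical linear order), with default `d`;
for a multiset of odd cardinality `2n-1` this is the usual median. -/
def medianOf {Y : Type*} [LinearOrder Y] (d : Y) (s : Multiset Y) : Y :=
  (s.sort (· ≤ ·)).getD (s.card / 2) d

/-- The median voter scheme with fixed ballots `α_1, ..., α_{n-1}`: it selects the median
of the `n` tops and the `n-1` fixed ballots. -/
noncomputable def medianScheme {n a b : ℕ} [Nonempty (Alt a b)]
    (α : Fin (n - 1) → Alt a b) (P : Profile n (Alt a b)) : Alt a b :=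
  medianOf (Classical.arbitrary (Alt a b))
    (Multiset.map (fun i => top (P i)) Finset.univ.val +
      Multiset.map α Finset.univ.val)

section AuxMedian

lemma sorted_getD_iff {Y : Type*} [LinearOrder Y] (p : Y → Prop) [DecidablePred p]
    (hp : ∀ u v : Y, u ≤ v → p v → p u)
    (l : List Y) (hl : l.Pairwise (· ≤ ·)) (d : Y) (j : ℕ) (hj : j < l.length) :
    p (l.getD j d) ↔ j < l.countP (fun y => decide (p y)) := by
  set pb : Y → Bool := fun y => decide (p y) with hpb
  have htd : l.takeWhile pb ++ l.dropWhile pb = l := List.takeWhile_append_dropWhile ..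
  have h1 : ∀ y ∈ l.takeWhile pb, p y := by
    intro y hy
    simpa [hpb] using List.mem_takeWhile_imp hy
  have h2 : ∀ y ∈ l.dropWhile pb, ¬ p y := by
    cases hdc : l.dropWhile pb with
    | nil => simp
    | cons hd tl =>
      have hhd : ¬ p hd := by
        have := List.head_dropWhile_not pb (l := l) (by simp [hdc])
        simp only [hdc, List.head_cons] at this
        simpa [hpb] using this
      have hs : (hd :: tl).Pairwise (· ≤ ·) :=
        hdc ▸ (List.Pairwise.sublist (List.dropWhile_sublist pb) hl)
      intro y hy
      rcases List.mem_cons.mp hy with rfl | hy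
      · exact hhd
      · intro hpy; exact hhd (hp _ _ ((List.pairwise_cons.mp hs).1 y hy) hpy)
  have hcount : l.countP pb = (l.takeWhile pb).length := by
    conv_lhs => rw [← htd]
    rw [List.countP_append,
        List.countP_eq_length.mpr (fun a ha => by simpa [hpb] using h1 a ha),
        List.countP_eq_zero.mpr (fun a ha => by simpa [hpb] using h2 a ha)]
    simp
  have hj' : j < (l.takeWhile pb ++ l.dropWhile pb).length := by rw [htd]; exact hj
  have hval : l.getD j d = (l.takeWhile pb ++ l.dropWhile pb)[j] := by
    rw [List.getD_eq_getElem l d hj]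
    exact (List.getElem_of_eq htd.symm hj)
  rw [hval, hcount]
  by_cases hc : j < (l.takeWhile pb).length
  · rw [List.getElem_append_left hc]
    exact iff_of_true (h1 _ (List.getElem_mem _)) hc
  · push_neg at hc
    rw [List.getElem_append_right hc]
    exact iff_of_false (h2 _ (List.getElem_mem _)) (by omega)

lemma medianOf_prop_down {Y : Type*} [LinearOrder Y] (p : Y → Prop) [DecidablePred p]
    (hp : ∀ u v : Y, u ≤ v → p v → p u) (d : Y) (s : Multiset Y)
    (h : Multiset.card s < 2 * s.countP p) : p (medianOf d s) := by
  have hcc := Multiset.countP_le_card p s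
  have hlen : (s.sort (· ≤ ·)).length = Multiset.card s := Multiset.length_sort _
  have hcount : (s.sort (· ≤ ·)).countP (fun y => decide (p y)) = s.countP p := by
    conv_rhs => rw [← Multiset.sort_eq s (· ≤ ·)]
    rw [Multiset.coe_countP]
  exact (sorted_getD_iff p hp (s.sort (· ≤ ·)) (Multiset.pairwise_sort _ _) d
    (Multiset.card s / 2) (by omega)).mpr (by omega)

lemma medianOf_prop_up {Y : Type*} [LinearOrder Y] (p : Y → Prop) [DecidablePred p]
    (hp : ∀ u v : Y, u ≤ v → p u → p v) (d : Y) (s : Multiset Y)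
    (h : Multiset.card s < 2 * s.countP p) : p (medianOf d s) := by
  have hcc := Multiset.countP_le_card p s
  have hlen : (s.sort (· ≤ ·)).length = Multiset.card s := Multiset.length_sort _
  have hsum : Multiset.card s = s.countP p + s.countP (fun y => ¬ p y) :=
    Multiset.card_eq_countP_add_countP p s
  have hcount : (s.sort (· ≤ ·)).countP (fun y => decide (¬ p y)) = s.countP (fun y => ¬ p y) := by
    conv_rhs => rw [← Multiset.sort_eq s (· ≤ ·)]
    rw [Multiset.coe_countP]
  have hiff := sorted_getD_iff (fun y => ¬ p y)
    (fun u v huv hv hu => hv (hp u v huv hu))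
    (s.sort (· ≤ ·)) (Multiset.pairwise_sort _ _) d (Multiset.card s / 2) (by omega)
  by_contra hq
  have h2 := hiff.mp hq
  omega

noncomputable def topOrder {a b : ℕ} (t : Alt a b) : LinearOrder (Alt a b) :=
  LinearOrder.lift' (fun y => if y = t then b + 1 else y.val) (by
    intro y z h
    simp only [] at h
    by_cases hy : y = t <;> by_cases hz : z = t
    · rw [hy, hz]
    · exfalso
      have hz2 := Finset.mem_Icc.mp z.2
      rw [if_pos hy, if_neg hz] at h
      omega
    · exfalso
      have hy2 := Finset.mem_Icc.mp y.2
      rw [if_neg hy, if_pos hz] at h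
      omega
    · rw [if_neg hy, if_neg hz] at h
      exact Subtype.ext h)

lemma top_topOrder {a b : ℕ} [Nonempty (Alt a b)] (t : Alt a b) : top (topOrder t) = t := by
  have hle : ∀ y : Alt a b, (topOrder t).le y t := by
    intro y
    show (if y = t then b + 1 else y.val) ≤ (if t = t then b + 1 else t.val)
    have := Finset.mem_Icc.mp y.2
    by_cases hy : y = t <;> simp [hy] <;> omega
  refine @le_antisymm _ (topOrder t).toPartialOrder _ _ ?_ ?_
  · exact @Finset.max'_le _ (topOrder t) _ _ t (fun y _ => hle y)
  · exact @Finset.le_max' _ (topOrder t) _ t (Finset.mem_univ t)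

end AuxMedian

/-- For a median voter scheme, `x ∈ V_i` iff `x < α_1` or `x > α_{n-1}`. -/
theorem medianScheme_vetoSet {n a b : ℕ} [Nonempty (Alt a b)]
    (hn : 2 ≤ n) (hab : a < b)
    (α : Fin (n - 1) → Alt a b) (hmono : Monotone α)
    (i : Fin n) (x : Alt a b) :
    x ∈ VetoSet (medianScheme α) i ↔
      x < α ⟨0, by omega⟩ ∨ α ⟨n - 2, by omega⟩ < x := by
  classical
  have h01 : (0:ℕ) < n - 1 := by omega
  have h02 : n - 2 < n - 1 := by omega
  set α0 := α ⟨0, h01⟩ with hα0def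
  set αl := α ⟨n - 2, h02⟩ with hαldef
  have hd : ∀ P : Profile n (Alt a b), medianScheme α P =
      medianOf (Classical.arbitrary (Alt a b))
        (Multiset.map (fun j => top (P j)) Finset.univ.val +
          Multiset.map α Finset.univ.val) := fun _ => rfl
  have hcard : ∀ P : Profile n (Alt a b),
      Multiset.card (Multiset.map (fun j => top (P j)) Finset.univ.val +
        Multiset.map α Finset.univ.val) = n + (n - 1) := by
    intro P
    simp
  have hα0le : ∀ j : Fin (n-1), (α0 : ℕ) ≤ (α j : ℕ) := by
    intro j
    exact hmono (by simp [Fin.le_def])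
  have hαlge : ∀ j : Fin (n-1), (α j : ℕ) ≤ (αl : ℕ) := by
    intro j
    exact hmono (by simp [Fin.le_def]; omega)
  have hαcnt : ∀ (q : Alt a b → Prop) (_ : DecidablePred q), (∀ j, q (α j)) →
      Multiset.countP q (Multiset.map α Finset.univ.val) = n - 1 := by
    intro q _ hq
    rw [Multiset.countP_eq_card.mpr]
    · simp
    · intro y hy
      rcases Multiset.mem_map.mp hy with ⟨j, _, rfl⟩
      exact hq j
  have hαone : ∀ (q : Alt a b → Prop) (_ : DecidablePred q) (j : Fin (n-1)), q (α j) →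
      1 ≤ Multiset.countP q (Multiset.map α Finset.univ.val) := by
    intro q _ j hq
    exact Multiset.countP_pos.mpr ⟨α j, Multiset.mem_map_of_mem _ (Finset.mem_univ_val _), hq⟩
  have htone : ∀ (P : Profile n (Alt a b)) (q : Alt a b → Prop) (_ : DecidablePred q)
      (j : Fin n), q (top (P j)) →
      1 ≤ Multiset.countP q (Multiset.map (fun j => top (P j)) Finset.univ.val) := by
    intro P q _ j hq
    exact Multiset.countP_pos.mpr
      ⟨top (P j), Multiset.mem_map_of_mem _ (Finset.mem_univ_val _), hq⟩
  constructor
  · rintro ⟨L, hL⟩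
    by_contra hcon
    push_neg at hcon
    obtain ⟨h1', h2'⟩ := hcon
    have h1 : (α0 : ℕ) ≤ (x : ℕ) := by
      have hv : ¬ ((x : ℕ) < (α0 : ℕ)) := h1'
      omega
    have h2 : (x : ℕ) ≤ (αl : ℕ) := by
      have hv : ¬ ((αl : ℕ) < (x : ℕ)) := h2'
      omega
    apply hL
    set P : Profile n (Alt a b) := Function.update (fun _ => topOrder x) i L with hP
    refine ⟨P, Function.update_self .., ?_⟩
    have hPtop : ∀ j : Fin n, j ≠ i → top (P j) = x := by
      intro j hj
      rw [hP, Function.update_of_ne hj, top_topOrder]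
    have hcnt : ∀ (q : Alt a b → Prop) (_ : DecidablePred q), q x →
        n - 1 ≤ Multiset.countP q (Multiset.map (fun j => top (P j)) Finset.univ.val) := by
      intro q _ hq
      rw [Multiset.countP_map]
      have hsub : Finset.univ.erase i ⊆ Finset.univ.filter (fun j => q (top (P j))) := by
        intro j hj
        rcases Finset.mem_erase.mp hj with ⟨hji, _⟩
        exact Finset.mem_filter.mpr ⟨Finset.mem_univ _, by rw [hPtop j hji]; exact hq⟩
      calc n - 1 = (Finset.univ.erase i).card := by
              rw [Finset.card_erase_of_mem (Finset.mem_univ i), Finset.card_univ,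
                Fintype.card_fin]
        _ ≤ (Finset.univ.filter (fun j => q (top (P j)))).card := Finset.card_le_card hsub
        _ = _ := by rw [Finset.card_def, Finset.filter_val]
    rw [hd P]
    have hdown : ((@medianOf (Alt a b) (Subtype.instLinearOrder _) (Classical.arbitrary (Alt a b))
        (Multiset.map (fun j => top (P j)) Finset.univ.val +
          Multiset.map α Finset.univ.val)) : ℕ) ≤ (x : ℕ) := by
      refine @medianOf_prop_down (Alt a b) (Subtype.instLinearOrder _)
        (fun y => (y : ℕ) ≤ (x : ℕ)) inferInstance ?_ _ _ ?_
      · intro u v huv hv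
        have hn1 : (u : ℕ) ≤ (v : ℕ) := huv
        omega
      · have hc := hcard P
        have ha := hcnt (fun y => (y : ℕ) ≤ (x : ℕ)) inferInstance le_rfl
        have hb := hαone (fun y => (y : ℕ) ≤ (x : ℕ)) inferInstance ⟨0, h01⟩ h1
        rw [Multiset.countP_add]
        omega
    have hup : (x : ℕ) ≤ ((@medianOf (Alt a b) (Subtype.instLinearOrder _) (Classical.arbitrary (Alt a b))
        (Multiset.map (fun j => top (P j)) Finset.univ.val +
          Multiset.map α Finset.univ.val)) : ℕ) := by
      refine @medianOf_prop_up (Alt a b) (Subtype.instLinearOrder _)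
        (fun y => (x : ℕ) ≤ (y : ℕ)) inferInstance ?_ _ _ ?_
      · intro u v huv hu
        have hn1 : (u : ℕ) ≤ (v : ℕ) := huv
        omega
      · have hc := hcard P
        have ha := hcnt (fun y => (x : ℕ) ≤ (y : ℕ)) inferInstance le_rfl
        have hb := hαone (fun y => (x : ℕ) ≤ (y : ℕ)) inferInstance ⟨n - 2, h02⟩ h2
        rw [Multiset.countP_add]
        omega
    exact Subtype.ext (le_antisymm hdown hup)
  · have hamem : a ∈ Finset.Icc a b := Finset.mem_Icc.mpr ⟨le_rfl, le_of_lt hab⟩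
    have hbmem : b ∈ Finset.Icc a b := Finset.mem_Icc.mpr ⟨le_of_lt hab, le_rfl⟩
    rintro (hx | hx)
    · have hxv : (x : ℕ) < (α0 : ℕ) := hx
      refine ⟨topOrder ⟨b, hbmem⟩, ?_⟩
      rintro ⟨P, hPi, hfP⟩
      have hα0b : (α0 : ℕ) ≤ b := (Finset.mem_Icc.mp α0.2).2
      have hmed : (x : ℕ) < ((medianScheme α P) : ℕ) := by
        rw [hd P]
        refine @medianOf_prop_up (Alt a b) (Subtype.instLinearOrder _)
          (fun y => (x : ℕ) < (y : ℕ)) inferInstance ?_ _ _ ?_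
        · intro u v huv hu
          have hn1 : (u : ℕ) ≤ (v : ℕ) := huv
          omega
        · have hc := hcard P
          have ha := htone P (fun y => (x : ℕ) < (y : ℕ)) inferInstance i
            (by rw [hPi, top_topOrder]; show (x:ℕ) < b; omega)
          have hb := hαcnt (fun y => (x : ℕ) < (y : ℕ)) inferInstance
            (fun j => lt_of_lt_of_le hxv (hα0le j))
          rw [Multiset.countP_add]
          omega
      rw [hfP] at hmed
      omega
    · have hxv : (αl : ℕ) < (x : ℕ) := hx
      refine ⟨topOrder ⟨a, hamem⟩, ?_⟩
      rintro ⟨P, hPi, hfP⟩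
      have hαla : a ≤ (αl : ℕ) := (Finset.mem_Icc.mp αl.2).1
      have hmed : ((medianScheme α P) : ℕ) < (x : ℕ) := by
        rw [hd P]
        refine @medianOf_prop_down (Alt a b) (Subtype.instLinearOrder _)
          (fun y => (y : ℕ) < (x : ℕ)) inferInstance ?_ _ _ ?_
        · intro u v huv hv
          have hn1 : (u : ℕ) ≤ (v : ℕ) := huv
          omega
        · have hc := hcard P
          have ha := htone P (fun y => (y : ℕ) < (x : ℕ)) inferInstance i
            (by rw [hPi, top_topOrder]; show (a:ℕ) < (x:ℕ); omega)
          have hb := hαcnt (fun y => (y : ℕ) < (x : ℕ)) inferInstance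
            (fun j => lt_of_le_of_lt (hαlge j) hxv)
          rw [Multiset.countP_add]
          omega
      rw [hfP] at hmed
      omega
end
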